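/- If g^r is strictly sos of degree 2re and p is a degree-d form with (f - c·p^2)·g^r sos for some c > 0 and f·g^r sos, then p·q ∈ U_{f g^r} for every form q of degree re; in particular p·R[x]_{re} ⊆ U_{f g^r}. -/

import Mathlib

open MvPolynomial Finsupp

/-- `f` is a sum of squares of forms of degree `d` in `n` variables. -/
def IsSOSForm (n d : ℕ) (f : MvPolynomial (Fin n) ℝ) : Prop :=
  ∃ (N : ℕ) (g : Fin N → MvPolynomial (Fin n) ℝ),
    (∀ i, (g i).IsHomogeneous d) ∧ f = ∑ i, (g i) ^ 2

/-- The cone `Σ_{2d}` of sums of squares of degree-`d` forms, as a subset of the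
finite-dimensional real vector space `R[x]_{2d}` of forms of degree `2d`. -/
def SigmaCone (n d : ℕ) : Set (homogeneousSubmodule (Fin n) ℝ (2 * d)) :=
  {f | IsSOSForm n d (f : MvPolynomial (Fin n) ℝ)}

/-- The canonical topology on the finite-dimensional real vector space of forms. -/
noncomputable instance (n d : ℕ) : TopologicalSpace (homogeneousSubmodule (Fin n) ℝ d) :=
  moduleTopology ℝ _

/-- A form is positive definite if it is positive away from the origin. -/
def PosDefForm (n : ℕ) (f : MvPolynomial (Fin n) ℝ) : Prop :=
  ∀ x : Fin n → ℝ, x ≠ 0 → 0 < eval x f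

/-- For a sos form `f` of degree `2d`, the set `U_f` of forms `p` of degree `d`
such that `f - c p ^ 2` is sos for some `c > 0`. -/
def Uset (n d : ℕ) (f : MvPolynomial (Fin n) ℝ) : Set (MvPolynomial (Fin n) ℝ) :=
  {p | p.IsHomogeneous d ∧ ∃ c : ℝ, 0 < c ∧ IsSOSForm n d (f - c • p ^ 2)}

/-! If `g ^ r - c' • q ^ 2` is sos, then so is `p ^ 2 * g ^ r - c' • (p * q) ^ 2`, and
  `f * g ^ r - (c * c') • (p * q) ^ 2`
    `= (f - c • p ^ 2) * g ^ r + c • (p ^ 2 * g ^ r - c' • (p * q) ^ 2)`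
is a sum of two sos forms. -/

namespace IsSOSForm

variable {n d : ℕ} {f h : MvPolynomial (Fin n) ℝ}

theorem add (hf : IsSOSForm n d f) (hh : IsSOSForm n d h) : IsSOSForm n d (f + h) := by
  obtain ⟨N, u, hu, rfl⟩ := hf
  obtain ⟨M, v, hv, rfl⟩ := hh
  refine ⟨N + M, Fin.append u v,
    fun i => Fin.addCases (by simpa using hu) (by simpa using hv) i, ?_⟩
  simp only [Fin.sum_univ_add, Fin.append_left, Fin.append_right]

theorem smul {c : ℝ} (hc : 0 ≤ c) (hf : IsSOSForm n d f) : IsSOSForm n d (c • f) := by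
  obtain ⟨N, u, hu, rfl⟩ := hf
  refine ⟨N, fun i => C (Real.sqrt c) * u i, fun i => (hu i).C_mul _, ?_⟩
  simp only [smul_eq_C_mul, Finset.mul_sum, mul_pow, ← map_pow, Real.sq_sqrt hc]

theorem sq_mul {k : ℕ} {p : MvPolynomial (Fin n) ℝ} (hp : p.IsHomogeneous k)
    (hf : IsSOSForm n d f) : IsSOSForm n (k + d) (p ^ 2 * f) := by
  obtain ⟨N, u, hu, rfl⟩ := hf
  exact ⟨N, fun i => p * u i, fun i => hp.mul (hu i), by simp only [Finset.mul_sum, mul_pow]⟩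

end IsSOSForm

section Uset

variable {n d k : ℕ} {F G h p q : MvPolynomial (Fin n) ℝ}

theorem mul_mem_Uset_sq_mul (hp : p.IsHomogeneous d) (hq : q ∈ Uset n k h) :
    p * q ∈ Uset n (d + k) (p ^ 2 * h) := by
  obtain ⟨hq, c, hc, hsos⟩ := hq
  refine ⟨hp.mul hq, c, hc, ?_⟩
  convert hsos.sq_mul hp using 1
  rw [mul_sub, mul_pow, mul_smul_comm]

theorem Uset_subset_of_isSOSForm_sub_smul {c : ℝ} (hc : 0 < c)
    (hsos : IsSOSForm n k (F - c • G)) : Uset n k G ⊆ Uset n k F := by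
  rintro u ⟨hu, c', hc', hsos'⟩
  refine ⟨hu, c * c', mul_pos hc hc', ?_⟩
  convert hsos.add (hsos'.smul hc.le) using 1
  rw [smul_sub, smul_smul]
  abel

end Uset

theorem mul_mem_Uset_of_strict_general (n d e r : ℕ) (f g p : MvPolynomial (Fin n) ℝ)
    (hp : p.IsHomogeneous d)
    (hgstrict : ∀ u : MvPolynomial (Fin n) ℝ, u.IsHomogeneous (e * r) →
      u ∈ Uset n (e * r) (g ^ r))
    (c : ℝ) (hc : 0 < c)
    (hsos1 : IsSOSForm n (d + e * r) ((f - c • p ^ 2) * g ^ r)) :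
    ∀ q : MvPolynomial (Fin n) ℝ, q.IsHomogeneous (e * r) →
      p * q ∈ Uset n (d + e * r) (f * g ^ r) := by
  intro q hq
  refine Uset_subset_of_isSOSForm_sub_smul hc ?_ (mul_mem_Uset_sq_mul hp (hgstrict q hq))
  rwa [sub_mul, smul_mul_assoc] at hsos1

theorem mul_mem_Uset_of_strict (n d e r : ℕ) (f g p : MvPolynomial (Fin n) ℝ)
    (hf : f.IsHomogeneous (2 * d)) (hg : g.IsHomogeneous (2 * e))
    (hp : p.IsHomogeneous d)
    (hgstrict : ∀ u : MvPolynomial (Fin n) ℝ, u.IsHomogeneous (e * r) →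
      u ∈ Uset n (e * r) (g ^ r))
    (c : ℝ) (hc : 0 < c)
    (hsos1 : IsSOSForm n (d + e * r) ((f - c • p ^ 2) * g ^ r))
    (hsos2 : IsSOSForm n (d + e * r) (f * g ^ r)) :
    ∀ q : MvPolynomial (Fin n) ℝ, q.IsHomogeneous (e * r) →
      p * q ∈ Uset n (d + e * r) (f * g ^ r) :=
  mul_mem_Uset_of_strict_general n d e r f g p hp hgstrict c hc hsos1
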